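/- arXiv:quant-ph/0307132 — 2 statements merged into one kernel-verified Lean document; each statement's English description precedes it below -/
import Mathlib

section
/- The map ε_p(a) = (1/(n−1))·a + (1 − 1/(n−1))·(p/n)·1ₙ maps B_n(p) into B_n^0(p); in particular, for every Hermitian a with Tr a = p > 0 and ‖a − (p/n)1ₙ‖² ≤ ((n−1)/n)p², the matrix ε_p(a) is positive semidefinite with trace p. -/
/-!
`ε_p` contracts by the factor `1/(n-1)` towards the centre `(p/n) • 1` of `B_n(p)`, so it fixes the
trace and divides the squared distance to the centre by `(n-1)²`, which maps `B_n(p)` into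
`B_n^0(p)`. A Hermitian matrix in `B_n^0(p)` has eigenvalues `ν` with `∑ ν = p` and
`∑ (ν - p/n)² ≤ p²/(n(n-1))`. The deviations `ν_j - p/n` sum to zero, so Cauchy–Schwarz on the
other `n - 1` of them gives `n (ν_i - p/n)² ≤ (n-1) ∑ (ν - p/n)² ≤ p²/n`, i.e.
`|ν_i - p/n| ≤ p/n`, and hence `ν_i ≥ 0`.
-/

open Finset ComplexOrder

lemma card_mul_sq_le_of_sum_eq_zero {ι : Type*} [Fintype ι] [DecidableEq ι] {y : ι → ℝ}
    (hy : ∑ j, y j = 0) (i : ι) :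
    Fintype.card ι * y i ^ 2 ≤ (Fintype.card ι - 1) * ∑ j, y j ^ 2 := by
  have hrest : y i = -∑ j ∈ univ.erase i, y j := by
    rw [← add_sum_erase univ y (mem_univ i)] at hy
    linarith
  have hcard : ((univ.erase i).card : ℝ) = Fintype.card ι - 1 := by
    rw [card_erase_of_mem (mem_univ i), card_univ, Nat.cast_pred (Fintype.card_pos_iff.mpr ⟨i⟩)]
  have hCS : (∑ j ∈ univ.erase i, y j) ^ 2 ≤
      (Fintype.card ι - 1) * ∑ j ∈ univ.erase i, y j ^ 2 := by
    rw [← hcard]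
    exact sq_sum_le_card_mul_sum_sq
  rw [← add_sum_erase univ (fun j => y j ^ 2) (mem_univ i), hrest, neg_sq]
  linarith

lemma nonneg_of_sum_eq_of_sum_sq_sub_le {ι : Type*} [Fintype ι] [DecidableEq ι] {ν : ι → ℝ} {p : ℝ}
    (hp : 0 ≤ p) (hn : 2 ≤ Fintype.card ι) (hsum : ∑ j, ν j = p)
    (hsq : ∑ j, (ν j - p / Fintype.card ι) ^ 2 ≤
      p ^ 2 / (Fintype.card ι * (Fintype.card ι - 1)))
    (i : ι) : 0 ≤ ν i := by
  set n : ℝ := (Fintype.card ι : ℝ)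
  have hn1 : 1 < n := by simp only [n]; exact_mod_cast hn
  have hcentred : ∑ j, (ν j - p / n) = 0 := by
    rw [sum_sub_distrib, hsum, sum_const, card_univ, nsmul_eq_mul]
    field_simp
    ring
  have hsq_i : (n * (ν i - p / n)) ^ 2 ≤ p ^ 2 :=
    calc (n * (ν i - p / n)) ^ 2 = n * (n * (ν i - p / n) ^ 2) := by ring
      _ ≤ n * ((n - 1) * ∑ j, (ν j - p / n) ^ 2) := by
        gcongr n * ?_
        exact card_mul_sq_le_of_sum_eq_zero hcentred i
      _ ≤ n * ((n - 1) * (p ^ 2 / (n * (n - 1)))) := by gcongr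
      _ = p ^ 2 := by field_simp [(sub_pos.2 hn1).ne']
  have hlow : -p ≤ n * (ν i - p / n) := (abs_le_of_sq_le_sq' hsq_i hp).1
  have hexpand : n * (ν i - p / n) = n * ν i - p := by field_simp
  exact nonneg_of_mul_nonneg_right (by linarith) (by linarith : (0 : ℝ) < n)

namespace Matrix

namespace IsHermitian

variable {𝕜 ι : Type*} [RCLike 𝕜] [Fintype ι] [DecidableEq ι] {A : Matrix ι ι 𝕜}

lemma trace_cfc (hA : A.IsHermitian) (f : ℝ → ℝ) :
    (cfc f A).trace = ∑ i, (f (hA.eigenvalues i) : 𝕜) := by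
  rw [hA.cfc_eq, IsHermitian.cfc, Unitary.conjStarAlgAut_apply, trace_mul_cycle,
    Unitary.coe_star_mul_self, one_mul, trace_diagonal]
  rfl

lemma trace_sub_smul_one_mul_self (hA : A.IsHermitian) (c : ℝ) :
    ((A - (c : 𝕜) • 1) * (A - (c : 𝕜) • 1)).trace =
      ∑ i, ((hA.eigenvalues i - c) ^ 2 : ℝ) := by
  have : (A - (c : 𝕜) • 1) * (A - (c : 𝕜) • 1) = cfc (fun x => (x - c) ^ 2) A := by
    rw [cfc_pow (fun x => x - c) 2 A, cfc_sub (fun x => x) (fun _ => c) A, cfc_id' ℝ A,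
      cfc_const c A, Algebra.algebraMap_eq_smul_one, sq, RCLike.real_smul_eq_coe_smul (K := 𝕜)]
  rw [this, hA.trace_cfc]
  push_cast
  rfl

/-- Every Hermitian matrix in `B_n^0(p)` is positive semidefinite. -/
lemma posSemidef_of_trace_eq_of_re_trace_sub_sq_le (hA : A.IsHermitian) {p : ℝ} (hp : 0 ≤ p)
    (hι : 2 ≤ Fintype.card ι) (htr : A.trace = p)
    (hdist : RCLike.re (((A - ((p / Fintype.card ι : ℝ) : 𝕜) • 1) *
      (A - ((p / Fintype.card ι : ℝ) : 𝕜) • 1)).trace) ≤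
        p ^ 2 / (Fintype.card ι * (Fintype.card ι - 1))) :
    A.PosSemidef := by
  refine hA.posSemidef_iff_eigenvalues_nonneg.mpr fun i => ?_
  refine nonneg_of_sum_eq_of_sum_sq_sub_le hp hι ?_ ?_ i
  · exact_mod_cast hA.trace_eq_sum_eigenvalues.symm.trans htr
  · rwa [hA.trace_sub_smul_one_mul_self, RCLike.ofReal_re] at hdist

end IsHermitian

variable {n : ℕ}

/-- The map `ε_p` of the paper. -/
noncomputable def epsilonMap (p : ℝ) (a : Matrix (Fin n) (Fin n) ℂ) : Matrix (Fin n) (Fin n) ℂ :=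
  (1 / ((n : ℂ) - 1)) • a + (1 - 1 / ((n : ℂ) - 1)) • (((p : ℂ) / n) • 1)

lemma epsilonMap_sub_smul_one (p : ℝ) (a : Matrix (Fin n) (Fin n) ℂ) :
    epsilonMap p a - ((p : ℂ) / n) • 1 = (1 / ((n : ℂ) - 1)) • (a - ((p : ℂ) / n) • 1) := by
  unfold epsilonMap
  module

lemma trace_epsilonMap (hn : n ≠ 0) {p : ℝ} {a : Matrix (Fin n) (Fin n) ℂ} (htr : a.trace = p) :
    (epsilonMap p a).trace = p := by
  rw [← sub_add_cancel (epsilonMap p a) (((p : ℂ) / n) • 1), epsilonMap_sub_smul_one, trace_add,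
    trace_smul, trace_sub, htr, trace_smul, trace_one, Fintype.card_fin]
  simp [hn]

lemma IsHermitian.epsilonMap {a : Matrix (Fin n) (Fin n) ℂ} (ha : a.IsHermitian) (p : ℝ) :
    (epsilonMap p a).IsHermitian := by
  have hself : ∀ c : ℝ, IsSelfAdjoint (c : ℂ) := fun c => Complex.conj_ofReal c
  rw [← sub_add_cancel (Matrix.epsilonMap p a) (((p : ℂ) / n) • 1), epsilonMap_sub_smul_one]
  have h1 := hself (1 / ((n : ℝ) - 1))
  have h2 := hself (p / n)
  push_cast at h1 h2
  exact ((ha.sub (isHermitian_one.smul h2)).smul h1).add (isHermitian_one.smul h2)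

lemma re_trace_epsilonMap_sub_sq (p : ℝ) (a : Matrix (Fin n) (Fin n) ℂ) :
    (((epsilonMap p a - ((p : ℂ) / n) • 1) * (epsilonMap p a - ((p : ℂ) / n) • 1)).trace).re =
      (((a - ((p : ℂ) / n) • 1) * (a - ((p : ℂ) / n) • 1)).trace).re / ((n : ℝ) - 1) ^ 2 := by
  have hcoef : 1 / ((n : ℂ) - 1) * (1 / ((n : ℂ) - 1)) = (((1 / ((n : ℝ) - 1)) ^ 2 : ℝ) : ℂ) := by
    push_cast
    ring
  rw [epsilonMap_sub_smul_one, smul_mul_smul_comm, trace_smul, smul_eq_mul, hcoef,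
    Complex.re_ofReal_mul, one_div, inv_pow, inv_mul_eq_div]

end Matrix

/-- The map `ε_p(a) = (1/(n−1))·a + (1 − 1/(n−1))·(p/n)·1` maps `B_n(p)` into `B_n^0(p)`;
in particular `ε_p(a)` is positive semidefinite with trace `p`. -/
theorem stmt_4 (n : ℕ) (hn : 2 ≤ n) (a : Matrix (Fin n) (Fin n) ℂ)
    (ha : a.IsHermitian) (p : ℝ) (hp : 0 < p) (htr : Matrix.trace a = (p : ℂ))
    (hball : Complex.re
        (Matrix.trace ((a - ((p : ℂ) / n) • (1 : Matrix (Fin n) (Fin n) ℂ)) *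
          (a - ((p : ℂ) / n) • (1 : Matrix (Fin n) (Fin n) ℂ))))
      ≤ (((n : ℝ) - 1) / n) * p ^ 2) :
    Matrix.trace ((1 / ((n : ℂ) - 1)) • a +
        (1 - 1 / ((n : ℂ) - 1)) • (((p : ℂ) / n) • (1 : Matrix (Fin n) (Fin n) ℂ))) = (p : ℂ) ∧
    Complex.re
        (Matrix.trace ((((1 / ((n : ℂ) - 1)) • a +
            (1 - 1 / ((n : ℂ) - 1)) • (((p : ℂ) / n) • (1 : Matrix (Fin n) (Fin n) ℂ))) -
              ((p : ℂ) / n) • (1 : Matrix (Fin n) (Fin n) ℂ)) *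
          (((1 / ((n : ℂ) - 1)) • a +
            (1 - 1 / ((n : ℂ) - 1)) • (((p : ℂ) / n) • (1 : Matrix (Fin n) (Fin n) ℂ))) -
              ((p : ℂ) / n) • (1 : Matrix (Fin n) (Fin n) ℂ))))
      ≤ p ^ 2 / ((n : ℝ) * ((n : ℝ) - 1)) ∧
    ((1 / ((n : ℂ) - 1)) • a +
        (1 - 1 / ((n : ℂ) - 1)) • (((p : ℂ) / n) • (1 : Matrix (Fin n) (Fin n) ℂ))).PosSemidef := by
  have hn0 : n ≠ 0 := by omega
  have hn1 : (1 : ℝ) < n := by exact_mod_cast hn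
  have htrε := Matrix.trace_epsilonMap hn0 htr
  have hdist : (((Matrix.epsilonMap p a - ((p : ℂ) / n) • 1) *
      (Matrix.epsilonMap p a - ((p : ℂ) / n) • 1)).trace).re ≤ p ^ 2 / (n * (n - 1)) := by
    rw [Matrix.re_trace_epsilonMap_sub_sq]
    calc _ ≤ ((n - 1) / n * p ^ 2) / ((n : ℝ) - 1) ^ 2 := by gcongr
      _ = p ^ 2 / (n * (n - 1)) := by field_simp [(sub_pos.2 hn1).ne']
  refine ⟨htrε, hdist, (ha.epsilonMap p).posSemidef_of_trace_eq_of_re_trace_sub_sq_le hp.le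
    (by simpa using hn) htrε ?_⟩
  simpa using hdist
end

section
/- For any orthogonal matrix T ∈ O(n²−1) and a traceless orthonormal Hermitian basis (f_α) of the traceless Hermitian matrices, the map φ[T,0](a) = (Tr a/n)·1ₙ + (1/(n−1))·∑_α (T x)_α f_α with x_α = Tr(a f_α) is a positive, trace-preserving, unital linear map on M_n(ℂ). -/
/-!
A Hermitian `b` with `Tr b = t ≥ 0` and `(n - 1) Tr b² ≤ t²` is positive semidefinite: a negative
eigenvalue would violate Cauchy–Schwarz for the remaining `n - 1` eigenvalues. For Hermitian `a`
with `x_β = Tr (a f_β)`, orthonormality of the traceless `f_α` gives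
`Tr φ(a)² = t² / n + ‖T x‖² / (n - 1)² = t² / n + ‖x‖² / (n - 1)²`, while Bessel's inequality
for the orthonormal family `1 / √n, f_α` together with `Tr a² ≤ (Tr a)²` for `a ≥ 0` gives
`t² / n + ‖x‖² ≤ t²`. Combining the two yields `(n - 1) Tr φ(a)² ≤ t²`.
-/

open ComplexOrder Matrix

/-- The map `φ[T,0](a) = (Tr a/n)·1 + (1/(n−1))·∑_α (Tx)_α f_α`, `x_β = Tr(a f_β)`. -/
noncomputable def phiT0 (n : ℕ) (f : Fin (n ^ 2 - 1) → Matrix (Fin n) (Fin n) ℂ)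
    (T : Matrix (Fin (n ^ 2 - 1)) (Fin (n ^ 2 - 1)) ℝ)
    (a : Matrix (Fin n) (Fin n) ℂ) : Matrix (Fin n) (Fin n) ℂ :=
  (Matrix.trace a / n) • (1 : Matrix (Fin n) (Fin n) ℂ) +
    (1 / ((n : ℂ) - 1)) • ∑ α, (∑ β, (T α β : ℂ) * Matrix.trace (a * f β)) • f α

lemma nonneg_of_card_sub_one_mul_sum_sq_le {ι : Type*} [Fintype ι] {μ : ι → ℝ}
    (hsum : 0 ≤ ∑ i, μ i) (hsq : (Fintype.card ι - 1 : ℝ) * ∑ i, μ i ^ 2 ≤ (∑ i, μ i) ^ 2)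
    (i : ι) : 0 ≤ μ i := by
  by_contra! hi
  classical
  set s := Finset.univ.erase i
  have hcard : (s.card : ℝ) = Fintype.card ι - 1 := by
    rw [← Finset.card_univ, ← Finset.card_erase_add_one (Finset.mem_univ i)]
    push_cast
    ring
  have hcs : (∑ j ∈ s, μ j) ^ 2 ≤ s.card * ∑ j ∈ s, μ j ^ 2 := sq_sum_le_card_mul_sum_sq
  rw [← Finset.add_sum_erase _ _ (Finset.mem_univ i)] at hsum
  rw [← Finset.add_sum_erase _ _ (Finset.mem_univ i),
    ← Finset.add_sum_erase _ _ (Finset.mem_univ i)] at hsq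
  rw [hcard] at hcs
  have hs : (0 : ℝ) ≤ s.card := by positivity
  nlinarith [mul_pos (neg_pos.mpr hi) (neg_pos.mpr hi)]

namespace Matrix

variable {𝕜 : Type*} [RCLike 𝕜] {m : Type*}

section Spectral

variable [Fintype m] {A : Matrix m m 𝕜}

lemma IsHermitian.trace_mul_self_eq_sum_sq_eigenvalues [DecidableEq m] (hA : A.IsHermitian) :
    (A * A).trace = ∑ i, (hA.eigenvalues i : 𝕜) ^ 2 := by
  conv_lhs => rw [hA.spectral_theorem, ← map_mul, Unitary.conjStarAlgAut_apply, trace_mul_cycle,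
    Unitary.coe_star_mul_self, one_mul, diagonal_mul_diagonal, trace_diagonal]
  simp [sq]

lemma IsHermitian.ofReal_re_trace (hA : A.IsHermitian) : (RCLike.re A.trace : 𝕜) = A.trace :=
  RCLike.conj_eq_iff_re.mp (by rw [← RCLike.star_def, ← trace_conjTranspose, hA.eq])

lemma IsHermitian.ofReal_re_trace_mul {B : Matrix m m 𝕜} (hA : A.IsHermitian)
    (hB : B.IsHermitian) : (RCLike.re (A * B).trace : 𝕜) = (A * B).trace :=
  RCLike.conj_eq_iff_re.mp (by
    rw [← RCLike.star_def, ← trace_conjTranspose, conjTranspose_mul, hA.eq, hB.eq, trace_mul_comm])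

lemma IsHermitian.re_trace_eq_sum_eigenvalues [DecidableEq m] (hA : A.IsHermitian) :
    RCLike.re A.trace = ∑ i, hA.eigenvalues i := by
  simp [hA.trace_eq_sum_eigenvalues]

lemma IsHermitian.re_trace_mul_self_eq_sum_sq_eigenvalues [DecidableEq m] (hA : A.IsHermitian) :
    RCLike.re (A * A).trace = ∑ i, hA.eigenvalues i ^ 2 := by
  rw [hA.trace_mul_self_eq_sum_sq_eigenvalues, map_sum]
  simp only [← RCLike.ofReal_pow, RCLike.ofReal_re]

lemma PosSemidef.re_trace_mul_self_le_sq [DecidableEq m] (hA : A.PosSemidef) :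
    RCLike.re (A * A).trace ≤ RCLike.re A.trace ^ 2 := by
  rw [hA.isHermitian.re_trace_mul_self_eq_sum_sq_eigenvalues,
    hA.isHermitian.re_trace_eq_sum_eigenvalues]
  exact Finset.sum_sq_le_sq_sum_of_nonneg fun i _ ↦ hA.eigenvalues_nonneg i

lemma IsHermitian.posSemidef_of_card_sub_one_mul_re_trace_mul_self_le [DecidableEq m]
    (hA : A.IsHermitian) (htr : 0 ≤ RCLike.re A.trace)
    (hsq : (Fintype.card m - 1 : ℝ) * RCLike.re (A * A).trace ≤ RCLike.re A.trace ^ 2) :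
    A.PosSemidef := by
  rw [hA.re_trace_eq_sum_eigenvalues] at htr hsq
  rw [hA.re_trace_mul_self_eq_sum_sq_eigenvalues] at hsq
  exact hA.posSemidef_iff_eigenvalues_nonneg.mpr (nonneg_of_card_sub_one_mul_sum_sq_le htr hsq)

end Spectral

lemma dotProduct_mulVec_mulVec_of_transpose_mul_self_eq_one {R κ ι : Type*} [CommSemiring R]
    [Fintype κ] [Fintype ι] [DecidableEq ι] {T : Matrix κ ι R} (hT : Tᵀ * T = 1) (x y : ι → R) :
    (T *ᵥ x) ⬝ᵥ (T *ᵥ y) = x ⬝ᵥ y := by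
  rw [dotProduct_mulVec, vecMul_mulVec, hT, vecMul_one]

section Bloch

variable {ι : Type*} [Fintype ι] [DecidableEq m] (f : ι → Matrix m m 𝕜)

def blochMatrix (c : ℝ) (y : ι → ℝ) : Matrix m m 𝕜 :=
  (c : 𝕜) • 1 + ∑ α, (y α : 𝕜) • f α

variable {f}

lemma isHermitian_blochMatrix (hf : ∀ α, (f α).IsHermitian) (c : ℝ) (y : ι → ℝ) :
    (blochMatrix f c y).IsHermitian := by
  simp [IsHermitian, blochMatrix, conjTranspose_sum, fun α ↦ (hf α).eq]

variable [Fintype m]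

lemma trace_blochMatrix (hf : ∀ α, (f α).trace = 0) (c : ℝ) (y : ι → ℝ) :
    (blochMatrix f c y).trace = ((c * Fintype.card m : ℝ) : 𝕜) := by
  simp [blochMatrix, hf, RCLike.real_smul_eq_coe_mul]

lemma trace_mul_blochMatrix (a : Matrix m m 𝕜) (c : ℝ) (y : ι → ℝ) :
    (a * blochMatrix f c y).trace = c * a.trace + ∑ α, y α * (a * f α).trace := by
  simp [blochMatrix, Matrix.mul_add, Matrix.mul_sum, RCLike.real_smul_eq_coe_mul]

lemma trace_blochMatrix_mul [DecidableEq ι] (hf : ∀ α, (f α).trace = 0)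
    (horth : ∀ α β, (f α * f β).trace = if α = β then 1 else 0) (c : ℝ) (y : ι → ℝ) (β : ι) :
    (blochMatrix f c y * f β).trace = y β := by
  simp [blochMatrix, Matrix.add_mul, Matrix.sum_mul, hf, horth, RCLike.real_smul_eq_coe_mul]

lemma trace_blochMatrix_mul_self [DecidableEq ι] (hf : ∀ α, (f α).trace = 0)
    (horth : ∀ α β, (f α * f β).trace = if α = β then 1 else 0) (c : ℝ) (y : ι → ℝ) :
    (blochMatrix f c y * blochMatrix f c y).trace =
      ((c ^ 2 * Fintype.card m + ∑ α, y α ^ 2 : ℝ) : 𝕜) := by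
  rw [trace_mul_blochMatrix, trace_blochMatrix hf]
  simp [trace_blochMatrix_mul hf horth, sq, mul_assoc]

lemma sq_re_trace_div_card_add_sum_sq_le [DecidableEq ι] (hherm : ∀ α, (f α).IsHermitian)
    (htraceless : ∀ α, (f α).trace = 0)
    (horth : ∀ α β, (f α * f β).trace = if α = β then 1 else 0) {a : Matrix m m 𝕜}
    (ha : a.IsHermitian) :
    RCLike.re a.trace ^ 2 / Fintype.card m + ∑ α, RCLike.re (a * f α).trace ^ 2 ≤
      RCLike.re (a * a).trace := by
  set t := RCLike.re a.trace
  set x := fun α ↦ RCLike.re (a * f α).trace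
  set s := blochMatrix f (t / Fintype.card m) x
  have hr : (a - s).IsHermitian := ha.sub (isHermitian_blochMatrix hherm _ _)
  -- Bessel's inequality: `s` is the orthogonal projection of `a` onto the span of `1` and `f`.
  have hnonneg : 0 ≤ RCLike.re ((a - s) * (a - s)).trace := by
    have := (posSemidef_conjTranspose_mul_self (a - s)).trace_nonneg
    rw [hr.eq] at this
    exact (RCLike.nonneg_iff.mp this).1
  have has : (a * s).trace = ((t ^ 2 / Fintype.card m + ∑ α, x α ^ 2 : ℝ) : 𝕜) := by
    have hx : ∀ α, (a * f α).trace = (x α : 𝕜) := fun α ↦ (ha.ofReal_re_trace_mul (hherm α)).symm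
    have ht : a.trace = (t : 𝕜) := ha.ofReal_re_trace.symm
    rw [trace_mul_blochMatrix, ht]
    simp only [hx, ← sq]
    push_cast
    ring
  have hss := trace_blochMatrix_mul_self htraceless horth (t / Fintype.card m) x
  have hexpand :
      ((a - s) * (a - s)).trace = (a * a).trace - 2 * (a * s).trace + (s * s).trace := by
    rw [Matrix.sub_mul, Matrix.mul_sub, Matrix.mul_sub, trace_sub, trace_sub, trace_sub,
      trace_mul_comm s a]
    ring
  rw [hexpand, has, hss, ← ha.ofReal_re_trace_mul ha] at hnonneg
  norm_cast at hnonneg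
  have hcard : (t / Fintype.card m) ^ 2 * Fintype.card m = t ^ 2 / Fintype.card m := by
    rcases eq_or_ne (Fintype.card m : ℝ) 0 with h | h
    · simp [h]
    · field_simp
  linarith

end Bloch

end Matrix

section phiT0

variable {n : ℕ} {f : Fin (n ^ 2 - 1) → Matrix (Fin n) (Fin n) ℂ}
  {T : Matrix (Fin (n ^ 2 - 1)) (Fin (n ^ 2 - 1)) ℝ}

lemma isLinearMap_phiT0 : IsLinearMap ℂ (phiT0 n f T) := by
  refine ⟨fun a b ↦ ?_, fun c a ↦ ?_⟩
  · simp only [phiT0, Matrix.add_mul, trace_add, add_div, add_smul, mul_add,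
      Finset.sum_add_distrib, smul_add]
    abel
  · simp only [phiT0, Matrix.smul_mul, trace_smul, smul_eq_mul, smul_add, smul_smul,
      Finset.smul_sum, Finset.mul_sum, mul_div_assoc]
    congr 1
    refine Finset.sum_congr rfl fun α _ ↦ congrArg₂ _ (Finset.sum_congr rfl fun β _ ↦ ?_) rfl
    ring

lemma trace_phiT0 (hn : n ≠ 0) (htraceless : ∀ α, (f α).trace = 0)
    (a : Matrix (Fin n) (Fin n) ℂ) :
    (phiT0 n f T a).trace = a.trace := by
  simp [phiT0, htraceless, hn]

lemma phiT0_one (hn : n ≠ 0) (htraceless : ∀ α, (f α).trace = 0) : phiT0 n f T 1 = 1 := by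
  simp [phiT0, htraceless, hn]

lemma phiT0_eq_blochMatrix (hherm : ∀ α, (f α).IsHermitian) {a : Matrix (Fin n) (Fin n) ℂ}
    (ha : a.IsHermitian) :
    phiT0 n f T a = blochMatrix f (RCLike.re a.trace / n)
      (((n : ℝ) - 1)⁻¹ • T *ᵥ fun β ↦ RCLike.re (a * f β).trace) := by
  set t := RCLike.re a.trace
  set x : Fin (n ^ 2 - 1) → ℝ := fun β ↦ RCLike.re (a * f β).trace
  have ht : a.trace = t := ha.ofReal_re_trace.symm
  have hx : ∀ β, (a * f β).trace = x β := fun β ↦ (ha.ofReal_re_trace_mul (hherm β)).symm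
  rw [phiT0, blochMatrix, ht, Finset.smul_sum]
  simp only [hx, smul_smul]
  push_cast
  congr 1
  refine Finset.sum_congr rfl fun α _ ↦ ?_
  simp [mulVec, dotProduct]

lemma posSemidef_phiT0 (hn : 2 ≤ n) (hherm : ∀ α, (f α).IsHermitian)
    (htraceless : ∀ α, (f α).trace = 0)
    (horth : ∀ α β, (f α * f β).trace = if α = β then 1 else 0) (hT : Tᵀ * T = 1)
    {a : Matrix (Fin n) (Fin n) ℂ} (ha : a.PosSemidef) : (phiT0 n f T a).PosSemidef := by
  have hN : (2 : ℝ) ≤ n := by exact_mod_cast hn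
  have ht : 0 ≤ RCLike.re a.trace := (RCLike.nonneg_iff.mp ha.trace_nonneg).1
  have hbessel := (sq_re_trace_div_card_add_sum_sq_le hherm htraceless horth ha.isHermitian).trans
    ha.re_trace_mul_self_le_sq
  have hTx : ∑ α, (T *ᵥ fun β ↦ RCLike.re (a * f β).trace) α ^ 2 =
      ∑ α, RCLike.re (a * f α).trace ^ 2 := by
    simpa only [dotProduct, sq] using dotProduct_mulVec_mulVec_of_transpose_mul_self_eq_one hT _ _
  rw [phiT0_eq_blochMatrix hherm ha.isHermitian]
  apply (isHermitian_blochMatrix hherm _ _).posSemidef_of_card_sub_one_mul_re_trace_mul_self_le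
  · rw [trace_blochMatrix htraceless, RCLike.ofReal_re]
    positivity
  · rw [trace_blochMatrix htraceless, trace_blochMatrix_mul_self htraceless horth]
    simp only [RCLike.ofReal_re, Fintype.card_fin, Pi.smul_apply, smul_eq_mul, mul_pow,
      ← Finset.mul_sum, hTx]
    simp only [Fintype.card_fin] at hbessel
    generalize RCLike.re a.trace = t at *
    generalize ∑ α, RCLike.re (a * f α).trace ^ 2 = X at *
    have hX : X ≤ t ^ 2 * (n - 1) / n := by
      rw [mul_sub, mul_one, sub_div, mul_div_assoc, div_self (by positivity)]
      linarith
    have hN1 : 0 < (n : ℝ) - 1 := by linarith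
    calc (n - 1) * ((t / n) ^ 2 * n + ((n : ℝ) - 1)⁻¹ ^ 2 * X)
        = t ^ 2 * (n - 1) / n + X / (n - 1) := by field_simp
      _ ≤ t ^ 2 * (n - 1) / n + t ^ 2 * (n - 1) / n / (n - 1) := by gcongr
      _ = (t / n) ^ 2 * n ^ 2 := by field_simp; ring

end phiT0

/-- For any orthogonal `T` and a traceless orthonormal Hermitian family `(f_α)`, the map
`φ[T,0]` is a positive, trace-preserving, unital linear map on `M_n(ℂ)`. -/
theorem stmt_7 (n : ℕ) (hn : 2 ≤ n) (f : Fin (n ^ 2 - 1) → Matrix (Fin n) (Fin n) ℂ)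
    (hherm : ∀ α, (f α).IsHermitian) (htraceless : ∀ α, Matrix.trace (f α) = 0)
    (horth : ∀ α β, Matrix.trace (f α * f β) = if α = β then 1 else 0)
    (T : Matrix (Fin (n ^ 2 - 1)) (Fin (n ^ 2 - 1)) ℝ)
    (hT : T.transpose * T = 1) :
    IsLinearMap ℂ (phiT0 n f T) ∧
    (∀ a : Matrix (Fin n) (Fin n) ℂ, Matrix.trace (phiT0 n f T a) = Matrix.trace a) ∧
    phiT0 n f T 1 = 1 ∧
    (∀ a : Matrix (Fin n) (Fin n) ℂ, a.PosSemidef → (phiT0 n f T a).PosSemidef) := by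
  have hn0 : n ≠ 0 := by omega
  exact ⟨isLinearMap_phiT0, trace_phiT0 hn0 htraceless, phiT0_one hn0 htraceless,
    fun _ ↦ posSemidef_phiT0 hn hherm htraceless horth hT⟩
end
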